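/- Let d ≥ 1, θ* ∈ ℝ^d, and W₀ ∈ ℝ^{d×d} symmetric positive definite. On a probability space (Ω, F, P), let (η_i)_{i≥1} be i.i.d. real random variables with E[η_i] = 0 and E[η_i²] = σ², and let F_s = σ(η₁,…,η_s). For each l ≥ 1 and t = l·d, suppose the actions x₁,…,x_t are such that for every batch k ∈ {1,…,l} the vectors x_{(k−1)d+1},…,x_{kd} almost surely form an orthonormal basis of ℝ^d and each is F_{(k−1)d}-measurable; let θ̂_t = (X_tᵀX_t + W₀)⁻¹X_tᵀY_t with X_t the matrix of actions and Y_t = X_tθ* + (η₁,…,η_t)ᵀ. Then limsup_{l→∞} (t/d²)·E[‖θ̂_t − θ*‖₂²] ≤ σ² (where t = l·d), i.e., the mean square error of the proposed batch algorithm decays at rate at most (d²/t)·σ²·(1+o(1)); in particular the estimator is consistent in mean square. -/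

import Mathlib

/-!
After `l` batches of orthonormal bases the Gram matrix is `XᵀX = l • 1`, so
`θ̂ − θ* = (W₀ + l • 1)⁻¹ (Xᵀη − W₀θ*)` and, `W₀` being positive semidefinite,
`‖θ̂ − θ*‖² ≤ ‖Xᵀη − W₀θ*‖² / l²`. The vector `Xᵀη = ∑ ηᵢ xᵢ` is a sum of martingale
differences: `xᵢ` and all earlier terms are functions of `η₀, …, ηᵢ₋₁`, hence independent of
the centred `ηᵢ`, so the cross terms vanish and `E‖Xᵀη − b‖² = t σ² + ‖b‖²`. Therefore
`(t / d²) E‖θ̂ − θ*‖² ≤ σ² + ‖W₀θ*‖² / (d l) → σ²`.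
-/

open MeasureTheory ProbabilityTheory Matrix Filter

namespace Matrix

variable {n : Type*}

lemma PosSemidef.posDef_add_smul_one [DecidableEq n] {W : Matrix n n ℝ} (hW : W.PosSemidef)
    {c : ℝ} (hc : 0 < c) : (W + c • 1).PosDef :=
  PosDef.posSemidef_add hW (PosDef.one.smul hc)

variable [Fintype n]

lemma dotProduct_self_nonneg (v : n → ℝ) : 0 ≤ v ⬝ᵥ v :=
  Finset.sum_nonneg fun i _ => mul_self_nonneg (v i)

lemma abs_apply_le_one_of_dotProduct_self_eq_one {v : n → ℝ} (hv : v ⬝ᵥ v = 1) (p : n) :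
    |v p| ≤ 1 := by
  rw [abs_le_one_iff_mul_self_le_one, ← hv]
  exact Finset.single_le_sum (f := fun q => v q * v q) (fun q _ => mul_self_nonneg _)
    (Finset.mem_univ p)

variable [DecidableEq n]

lemma PosSemidef.sq_mul_dotProduct_self_le {W : Matrix n n ℝ} (hW : W.PosSemidef) {c : ℝ}
    (hc : 0 ≤ c) (w : n → ℝ) :
    c ^ 2 * (w ⬝ᵥ w) ≤ ((W + c • 1) *ᵥ w) ⬝ᵥ ((W + c • 1) *ᵥ w) := by
  have hWw : 0 ≤ w ⬝ᵥ (W *ᵥ w) := by simpa using hW.dotProduct_mulVec_nonneg w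
  have hexp : ((W + c • 1) *ᵥ w) ⬝ᵥ ((W + c • 1) *ᵥ w)
      = (W *ᵥ w) ⬝ᵥ (W *ᵥ w) + 2 * c * (w ⬝ᵥ (W *ᵥ w)) + c ^ 2 * (w ⬝ᵥ w) := by
    simp only [add_mulVec, smul_mulVec, one_mulVec, add_dotProduct, dotProduct_add,
      smul_dotProduct, dotProduct_smul, smul_eq_mul, dotProduct_comm (W *ᵥ w) w]
    ring
  rw [hexp]
  nlinarith [mul_nonneg hc hWw, dotProduct_self_nonneg (W *ᵥ w)]

lemma PosSemidef.dotProduct_inv_add_smul_one_mulVec_le {W : Matrix n n ℝ} (hW : W.PosSemidef)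
    {c : ℝ} (hc : 0 < c) (v : n → ℝ) :
    ((W + c • 1)⁻¹ *ᵥ v) ⬝ᵥ ((W + c • 1)⁻¹ *ᵥ v) ≤ v ⬝ᵥ v / c ^ 2 := by
  have hdet : IsUnit (W + c • 1).det :=
    (isUnit_iff_isUnit_det _).mp (hW.posDef_add_smul_one hc).isUnit
  rw [le_div_iff₀' (by positivity)]
  have h := hW.sq_mul_dotProduct_self_le hc.le ((W + c • 1)⁻¹ *ᵥ v)
  rwa [mulVec_mulVec, mul_nonsing_inv _ hdet, one_mulVec] at h

end Matrix

section Ridge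

variable {m n : Type*} [Fintype m] [Fintype n] [DecidableEq n]

noncomputable def ridgeEstimate (W : Matrix n n ℝ) (X : Matrix m n ℝ) (Y : m → ℝ) : n → ℝ :=
  (W + Xᵀ * X)⁻¹ *ᵥ (Xᵀ *ᵥ Y)

lemma ridgeEstimate_sub {W : Matrix n n ℝ} {X : Matrix m n ℝ}
    (h : IsUnit (W + Xᵀ * X).det) (θ : n → ℝ) (e : m → ℝ) :
    ridgeEstimate W X (X *ᵥ θ + e) - θ = (W + Xᵀ * X)⁻¹ *ᵥ (Xᵀ *ᵥ e - W *ᵥ θ) := by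
  set A := W + Xᵀ * X
  calc ridgeEstimate W X (X *ᵥ θ + e) - θ
        = A⁻¹ *ᵥ (Xᵀ *ᵥ (X *ᵥ θ + e)) - A⁻¹ *ᵥ (A *ᵥ θ) := by
        rw [mulVec_mulVec θ A⁻¹ A, nonsing_inv_mul _ h, one_mulVec]
        rfl
    _ = A⁻¹ *ᵥ (Xᵀ *ᵥ e - W *ᵥ θ) := by
        rw [← mulVec_sub, mulVec_add, mulVec_mulVec, add_mulVec]
        abel_nf

end Ridge

def IsBatchOrthonormal (d : ℕ) (y : ℕ → Fin d → ℝ) : Prop :=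
  ∀ k : ℕ, ∀ j < d, ∀ j' < d, y (k * d + j) ⬝ᵥ y (k * d + j') = if j = j' then 1 else 0

def designMatrix {d : ℕ} (y : ℕ → Fin d → ℝ) (t : ℕ) : Matrix (Fin t) (Fin d) ℝ :=
  Matrix.of fun i j => y i j

namespace IsBatchOrthonormal

variable {d : ℕ} {y : ℕ → Fin d → ℝ}

lemma dotProduct_self (h : IsBatchOrthonormal d y) (hd : 0 < d) (i : ℕ) : y i ⬝ᵥ y i = 1 := by
  simpa [Nat.div_add_mod'] using h (i / d) (i % d) (Nat.mod_lt i hd) (i % d) (Nat.mod_lt i hd)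

lemma sum_mul_eq (h : IsBatchOrthonormal d y) (k : ℕ) (p q : Fin d) :
    ∑ r : Fin d, y (k * d + r) p * y (k * d + r) q = if p = q then 1 else 0 := by
  set M : Matrix (Fin d) (Fin d) ℝ := Matrix.of fun r p => y (k * d + r) p
  have hrows : M * Mᵀ = 1 := by
    ext r r'
    simpa [M, mul_apply, one_apply, dotProduct, Fin.val_eq_val] using h k r r.2 r' r'.2
  have hcols : Mᵀ * M = 1 := mul_eq_one_comm.mp hrows
  simpa [M, mul_apply, one_apply] using congrFun (congrFun hcols p) q

lemma transpose_designMatrix_mul (h : IsBatchOrthonormal d y) (l : ℕ) :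
    (designMatrix y (l * d))ᵀ * designMatrix y (l * d) = (l : ℝ) • 1 := by
  ext p q
  simp only [designMatrix, mul_apply, transpose_apply, of_apply, Matrix.smul_apply]
  rw [← finProdFinEquiv.sum_comp, Fintype.sum_prod_type]
  have hidx (k r : ℕ) : r + d * k = k * d + r := by ring
  simp [finProdFinEquiv, hidx, h.sum_mul_eq, one_apply]

end IsBatchOrthonormal

lemma designMatrix_transpose_mulVec {d : ℕ} (y : ℕ → Fin d → ℝ) (a : ℕ → ℝ) (t : ℕ) :
    (designMatrix y t)ᵀ *ᵥ (fun i : Fin t => a i) = ∑ i ∈ Finset.range t, a i • y i := by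
  ext p
  simp [designMatrix, mulVec, dotProduct, Finset.sum_apply, mul_comm,
    Fin.sum_univ_eq_sum_range (fun i => y i p * a i)]

section Noise

variable {Ω : Type*} {ι : Type*} [Fintype ι] {η : ℕ → Ω → ℝ} {x : ℕ → Ω → ι → ℝ}

-- `σ(η₀, …, ηₙ₋₁)`: the information available before round `n` (rounds are indexed from `0`)
abbrev pastNoise (η : ℕ → Ω → ℝ) (n : ℕ) : MeasurableSpace Ω :=
  MeasurableSpace.comap (fun ω (i : Fin n) => η i ω) inferInstance

lemma measurable_pastNoise {i n : ℕ} (h : i < n) : Measurable[pastNoise η n] (η i) :=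
  (measurable_pi_apply (⟨i, h⟩ : Fin n)).comp (comap_measurable fun ω (j : Fin n) => η j ω)

lemma pastNoise_mono : Monotone (pastNoise η) := by
  intro m n h
  have hres : Measurable fun (v : Fin n → ℝ) (j : Fin m) => v (Fin.castLE h j) :=
    measurable_pi_lambda _ fun j => measurable_pi_apply _
  change MeasurableSpace.comap ((fun v j => v (Fin.castLE h j)) ∘ fun ω (j : Fin n) => η j ω) _ ≤ _
  rw [← MeasurableSpace.comap_comp]
  exact MeasurableSpace.comap_mono hres.comap_le

lemma pastNoise_le [MeasurableSpace Ω] (hη : ∀ i, Measurable (η i)) (n : ℕ) :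
    pastNoise η n ≤ ‹MeasurableSpace Ω› :=
  measurable_iff_comap_le.mp <| measurable_pi_lambda _ fun i => hη i

lemma indepFun_of_measurable_pastNoise [MeasurableSpace Ω] {P : Measure Ω}
    (hη : ∀ i, Measurable (η i)) (hindep : iIndepFun η P)
    {n i : ℕ} (hni : n ≤ i) {f : Ω → ℝ} (hf : Measurable[pastNoise η n] f) :
    IndepFun f (η i) P := by
  have hdisj : Disjoint (Finset.range n) {i} := by simpa using hni
  have hblock := (hindep.indepFun_finset _ _ hdisj hη).comp
    (measurable_pi_lambda (fun v (j : Fin n) => v ⟨j, Finset.mem_range.mpr j.2⟩)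
      fun j => measurable_pi_apply _)
    (measurable_pi_apply ⟨i, Finset.mem_singleton_self i⟩)
  rw [IndepFun_iff_Indep] at hblock ⊢
  exact indep_of_indep_of_le_left hblock (measurable_iff_comap_le.mp hf)

lemma integral_mul_noise_eq_zero [MeasurableSpace Ω] {P : Measure Ω}
    (hη : ∀ i, Measurable (η i)) (hindep : iIndepFun η P)
    (hmean : ∀ i, ∫ ω, η i ω ∂P = 0) {n i : ℕ} (hni : n ≤ i) {f : Ω → ℝ}
    (hf : Measurable[pastNoise η n] f) : ∫ ω, f ω * η i ω ∂P = 0 := by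
  rw [(indepFun_of_measurable_pastNoise hη hindep hni hf).integral_fun_mul_eq_mul_integral
    (hf.mono (pastNoise_le hη n) le_rfl).aestronglyMeasurable (hη i).aestronglyMeasurable,
    hmean, mul_zero]

def noiseSum (η : ℕ → Ω → ℝ) (x : ℕ → Ω → ι → ℝ) (t : ℕ) (ω : Ω) : ι → ℝ :=
  ∑ i ∈ Finset.range t, η i ω • x i ω

lemma measurable_noiseSum (hpred : ∀ i, Measurable[pastNoise η i] (x i)) (t : ℕ) :
    Measurable[pastNoise η t] (noiseSum η x t) := by
  refine Finset.measurable_sum _ fun i hi => ?_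
  have hit : i < t := Finset.mem_range.mp hi
  exact (measurable_pastNoise hit).smul ((hpred i).mono (pastNoise_mono hit.le) le_rfl)

end Noise

section NoiseSum

variable {Ω : Type*} [MeasurableSpace Ω] {P : Measure Ω} {ι : Type*} [Fintype ι]
  {η : ℕ → Ω → ℝ} {x : ℕ → Ω → ι → ℝ}

lemma integrable_dotProduct_of_memLp_two {u v : Ω → ι → ℝ}
    (hu : ∀ p, MemLp (fun ω => u ω p) 2 P) (hv : ∀ p, MemLp (fun ω => v ω p) 2 P) :
    Integrable (fun ω => u ω ⬝ᵥ v ω) P :=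
  integrable_finsetSum _ fun p _ => (hu p).integrable_mul (hv p)

lemma memLp_two_noise_mul_apply (hη : ∀ i, Measurable (η i))
    (hL2 : ∀ i, Integrable (fun ω => η i ω ^ 2) P) (hxmeas : ∀ i, Measurable (x i))
    (hunit : ∀ᵐ ω ∂P, ∀ i, x i ω ⬝ᵥ x i ω = 1) (i : ℕ) (p : ι) :
    MemLp (fun ω => η i ω * x i ω p) 2 P := by
  have hηL2 : MemLp (η i) 2 P :=
    (memLp_two_iff_integrable_sq (hη i).aestronglyMeasurable).mpr (hL2 i)
  have hxbdd : MemLp (fun ω => x i ω p) ⊤ P :=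
    memLp_top_of_bound ((measurable_pi_apply p).comp (hxmeas i)).aestronglyMeasurable 1
      (by filter_upwards [hunit] with ω hω
          using abs_apply_le_one_of_dotProduct_self_eq_one (hω i) p)
  exact hxbdd.mul' hηL2

lemma memLp_two_noiseSum_sub_apply [IsFiniteMeasure P] (hη : ∀ i, Measurable (η i))
    (hL2 : ∀ i, Integrable (fun ω => η i ω ^ 2) P) (hxmeas : ∀ i, Measurable (x i))
    (hunit : ∀ᵐ ω ∂P, ∀ i, x i ω ⬝ᵥ x i ω = 1) (b : ι → ℝ) (t : ℕ) (p : ι) :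
    MemLp (fun ω => (noiseSum η x t ω - b) p) 2 P := by
  simp only [noiseSum, Pi.sub_apply, Finset.sum_apply, Pi.smul_apply, smul_eq_mul]
  exact (memLp_finsetSum _ fun i _ =>
    memLp_two_noise_mul_apply hη hL2 hxmeas hunit i p).sub (memLp_const (b p))

lemma integral_dotProduct_self_noiseSum_sub [IsProbabilityMeasure P] {σ : ℝ}
    (hη : ∀ i, Measurable (η i)) (hindep : iIndepFun η P)
    (hL2 : ∀ i, Integrable (fun ω => η i ω ^ 2) P) (hmean : ∀ i, ∫ ω, η i ω ∂P = 0)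
    (hvar : ∀ i, ∫ ω, η i ω ^ 2 ∂P = σ ^ 2)
    (hpred : ∀ i, Measurable[pastNoise η i] (x i)) (hunit : ∀ᵐ ω ∂P, ∀ i, x i ω ⬝ᵥ x i ω = 1)
    (b : ι → ℝ) (t : ℕ) :
    ∫ ω, (noiseSum η x t ω - b) ⬝ᵥ (noiseSum η x t ω - b) ∂P = t * σ ^ 2 + b ⬝ᵥ b := by
  have hxmeas i : Measurable (x i) := (hpred i).mono (pastNoise_le hη i) le_rfl
  have hu := memLp_two_noiseSum_sub_apply hη hL2 hxmeas hunit b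
  have hv := memLp_two_noise_mul_apply hη hL2 hxmeas hunit
  induction t with
  | zero => simp [noiseSum]
  | succ t ih =>
    set u := fun ω => noiseSum η x t ω - b
    set v := fun ω => η t ω • x t ω
    have hsplit ω : (noiseSum η x (t + 1) ω - b) ⬝ᵥ (noiseSum η x (t + 1) ω - b)
        = u ω ⬝ᵥ u ω + (2 * (u ω ⬝ᵥ v ω) + v ω ⬝ᵥ v ω) := by
      simp only [u, v, noiseSum, Finset.sum_range_succ, add_sub_right_comm, add_dotProduct,
        dotProduct_add, dotProduct_comm (η t ω • x t ω)]
      ring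
    -- `u` is determined by the noise before round `t`, which is independent of `η t`
    have hcross : ∫ ω, u ω ⬝ᵥ v ω ∂P = 0 := by
      have hu_past : Measurable[pastNoise η t] fun ω => u ω ⬝ᵥ x t ω :=
        Finset.measurable_sum _ fun p _ =>
          ((measurable_pi_apply p).comp ((measurable_noiseSum hpred t).sub_const b)).mul
            ((measurable_pi_apply p).comp (hpred t))
      simpa [v, dotProduct_smul, mul_comm] using
        integral_mul_noise_eq_zero hη hindep hmean le_rfl hu_past
    have hvv : ∫ ω, v ω ⬝ᵥ v ω ∂P = σ ^ 2 := by
      rw [← hvar t]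
      refine integral_congr_ae ?_
      filter_upwards [hunit] with ω hω
      simp [v, hω t, sq]
    have huu : ∫ ω, u ω ⬝ᵥ u ω ∂P = t * σ ^ 2 + b ⬝ᵥ b := ih
    have hu_int : Integrable (fun ω => u ω ⬝ᵥ u ω) P :=
      integrable_dotProduct_of_memLp_two (hu t) (hu t)
    have huv_int : Integrable (fun ω => 2 * (u ω ⬝ᵥ v ω)) P :=
      (integrable_dotProduct_of_memLp_two (hu t) (hv t)).const_mul 2
    have hvv_int : Integrable (fun ω => v ω ⬝ᵥ v ω) P :=
      integrable_dotProduct_of_memLp_two (hv t) (hv t)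
    have hrest_int : Integrable (fun ω => 2 * (u ω ⬝ᵥ v ω) + v ω ⬝ᵥ v ω) P :=
      huv_int.add hvv_int
    rw [integral_congr_ae (.of_forall hsplit), integral_add hu_int hrest_int,
      integral_add huv_int hvv_int, integral_const_mul, hcross, hvv, huu]
    push_cast
    ring

end NoiseSum

lemma IsBatchOrthonormal.ridgeEstimate_sub {d : ℕ} {y : ℕ → Fin d → ℝ}
    (h : IsBatchOrthonormal d y) {W : Matrix (Fin d) (Fin d) ℝ} (hW : W.PosSemidef)
    {l : ℕ} (hl : 0 < l) (θ : Fin d → ℝ) (e : ℕ → ℝ) :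
    ridgeEstimate W (designMatrix y (l * d))
        (designMatrix y (l * d) *ᵥ θ + fun i : Fin (l * d) => e i) - θ
      = (W + (l : ℝ) • 1)⁻¹ *ᵥ (∑ i ∈ Finset.range (l * d), e i • y i - W *ᵥ θ) := by
  have hgram := h.transpose_designMatrix_mul l
  have hdet : IsUnit (W + (designMatrix y (l * d))ᵀ * designMatrix y (l * d)).det := by
    rw [hgram]
    exact (isUnit_iff_isUnit_det _).mp (hW.posDef_add_smul_one (by positivity)).isUnit
  rw [_root_.ridgeEstimate_sub hdet, hgram, designMatrix_transpose_mulVec]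

lemma integral_ridgeEstimate_error_le {Ω : Type*} [MeasurableSpace Ω] {P : Measure Ω}
    [IsProbabilityMeasure P] {d : ℕ} {W : Matrix (Fin d) (Fin d) ℝ} (hW : W.PosSemidef)
    {σ : ℝ} {η : ℕ → Ω → ℝ} (hη : ∀ i, Measurable (η i)) (hindep : iIndepFun η P)
    (hL2 : ∀ i, Integrable (fun ω => η i ω ^ 2) P) (hmean : ∀ i, ∫ ω, η i ω ∂P = 0)
    (hvar : ∀ i, ∫ ω, η i ω ^ 2 ∂P = σ ^ 2) {x : ℕ → Ω → Fin d → ℝ}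
    (horth : ∀ᵐ ω ∂P, IsBatchOrthonormal d fun i => x i ω)
    (hpred : ∀ i, Measurable[pastNoise η i] (x i)) (hd : 0 < d) (θ : Fin d → ℝ)
    {l : ℕ} (hl : 0 < l) (θhat : Ω → Fin d → ℝ)
    (hθhat : ∀ ω, θhat ω = ridgeEstimate W (designMatrix (fun i => x i ω) (l * d))
      (designMatrix (fun i => x i ω) (l * d) *ᵥ θ + fun i : Fin (l * d) => η i ω)) :
    ∫ ω, (θhat ω - θ) ⬝ᵥ (θhat ω - θ) ∂P
      ≤ ((l * d : ℕ) * σ ^ 2 + (W *ᵥ θ) ⬝ᵥ (W *ᵥ θ)) / (l : ℝ) ^ 2 := by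
  set S := fun ω => noiseSum η x (l * d) ω - W *ᵥ θ
  have hunit : ∀ᵐ ω ∂P, ∀ i, x i ω ⬝ᵥ x i ω = 1 := by
    filter_upwards [horth] with ω hω using hω.dotProduct_self hd
  have herr : ∀ᵐ ω ∂P, (θhat ω - θ) ⬝ᵥ (θhat ω - θ) ≤ S ω ⬝ᵥ S ω / (l : ℝ) ^ 2 := by
    filter_upwards [horth] with ω hω
    rw [hθhat ω, hω.ridgeEstimate_sub hW hl θ fun i => η i ω]
    exact hW.dotProduct_inv_add_smul_one_mulVec_le (by positivity) _
  have hxmeas i : Measurable (x i) := (hpred i).mono (pastNoise_le hη i) le_rfl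
  have hS := memLp_two_noiseSum_sub_apply hη hL2 hxmeas hunit (W *ᵥ θ) (l * d)
  calc _ ≤ ∫ ω, S ω ⬝ᵥ S ω / (l : ℝ) ^ 2 ∂P :=
        integral_mono_of_nonneg (.of_forall fun ω => dotProduct_self_nonneg _)
          ((integrable_dotProduct_of_memLp_two hS hS).div_const _) herr
    _ = _ := by
        rw [integral_div,
          integral_dotProduct_self_noiseSum_sub hη hindep hL2 hmean hvar hpred hunit]

lemma limsup_le_of_le_add_div {u : ℕ → ℝ} {a C : ℝ} (hu : ∀ l, 0 ≤ u l)
    (h : ∀ l, 0 < l → u l ≤ a + C / l) : atTop.limsup u ≤ a := by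
  have hlim : Tendsto (fun l : ℕ => a + C / l) atTop (nhds a) := by
    simpa using tendsto_const_nhds.add (tendsto_const_div_atTop_nhds_zero_nat C)
  calc atTop.limsup u ≤ atTop.limsup fun l : ℕ => a + C / l :=
        limsup_le_limsup (eventually_atTop.mpr ⟨1, fun l hl => h l hl⟩)
          (isCoboundedUnder_le_of_le atTop hu) hlim.isBoundedUnder_le
    _ = a := hlim.limsup_eq

theorem stmt_16_general {d : ℕ} (hd : 1 ≤ d) {Ω : Type*} [MeasurableSpace Ω]
    (P : Measure Ω) [IsProbabilityMeasure P]
    (θstar : Fin d → ℝ)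
    (W0 : Matrix (Fin d) (Fin d) ℝ) (hW0 : W0.PosDef)
    (σ : ℝ)
    (η : ℕ → Ω → ℝ) (hηmeas : ∀ i, Measurable (η i))
    (hindep : iIndepFun η P)
    (hL2 : ∀ i, Integrable (fun ω => (η i ω) ^ 2) P)
    (hmean : ∀ i, ∫ ω, η i ω ∂P = 0)
    (hvar : ∀ i, ∫ ω, (η i ω) ^ 2 ∂P = σ ^ 2)
    (x : ℕ → Ω → Fin d → ℝ)
    -- within every batch `k`, the `d` actions form an orthonormal basis of `ℝ^d` a.s.
    (horth : ∀ᵐ ω ∂P, ∀ k : ℕ, ∀ j < d, ∀ j' < d,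
      x (k * d + j) ω ⬝ᵥ x (k * d + j') ω = if j = j' then (1 : ℝ) else 0)
    -- every action of batch `k` is measurable w.r.t. `F_{k·d} = σ(η₀, …, η_{k·d−1})`
    (hadapt : ∀ k : ℕ, ∀ j < d, Measurable[MeasurableSpace.comap
      (fun ω => (fun i : Fin (k * d) => η (i : ℕ) ω)) inferInstance] (x (k * d + j)))
    (θhat : (l : ℕ) → Ω → Fin d → ℝ)
    (hθhat : ∀ l ω, θhat l ω =
      (W0 + (Matrix.of fun (i : Fin (l * d)) j => x (i : ℕ) ω j)ᵀ
          * (Matrix.of fun (i : Fin (l * d)) j => x (i : ℕ) ω j))⁻¹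
        *ᵥ ((Matrix.of fun (i : Fin (l * d)) j => x (i : ℕ) ω j)ᵀ
          *ᵥ ((Matrix.of fun (i : Fin (l * d)) j => x (i : ℕ) ω j) *ᵥ θstar
              + fun i : Fin (l * d) => η (i : ℕ) ω))) :
    atTop.limsup (fun l : ℕ => (((l * d : ℕ) : ℝ) / (d : ℝ) ^ 2)
        * ∫ ω, (θhat l ω - θstar) ⬝ᵥ (θhat l ω - θstar) ∂P) ≤ σ ^ 2 := by
  have hd0 : 0 < d := hd
  have hpred i : Measurable[pastNoise η i] (x i) := by
    have h := hadapt (i / d) (i % d) (Nat.mod_lt i hd0)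
    rw [Nat.div_add_mod'] at h
    exact h.mono (pastNoise_mono (Nat.div_mul_le_self i d)) le_rfl
  set B := (W0 *ᵥ θstar) ⬝ᵥ (W0 *ᵥ θstar)
  refine limsup_le_of_le_add_div (C := B / d) (fun l => mul_nonneg (by positivity)
    (integral_nonneg fun ω => dotProduct_self_nonneg _)) fun l hl => ?_
  have hmse := integral_ridgeEstimate_error_le hW0.posSemidef hηmeas hindep hL2 hmean hvar
    horth hpred hd0 θstar hl (θhat l) (hθhat l)
  have hl' : (0 : ℝ) < l := by exact_mod_cast hl
  calc _ ≤ (((l * d : ℕ) : ℝ) / (d : ℝ) ^ 2) * (((l * d : ℕ) * σ ^ 2 + B) / (l : ℝ) ^ 2) :=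
        mul_le_mul_of_nonneg_left hmse (by positivity)
    _ = σ ^ 2 + B / d / l := by
        push_cast
        field_simp

/-- The batch algorithm (each consecutive block of `d` rounds plays an
orthonormal basis of `ℝ^d` measurable w.r.t. the noise of the previous blocks) produces a
mean-square-consistent estimator: `limsup_{l→∞} (t/d²)·E[‖θ̂_t − θ*‖₂²] ≤ σ²`, where
`t = l·d`; i.e. the MSE decays at rate at most `(d²/t)·σ²·(1+o(1))`. -/
theorem stmt_16 {d : ℕ} (hd : 1 ≤ d) {Ω : Type*} [MeasurableSpace Ω]
    (P : Measure Ω) [IsProbabilityMeasure P]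
    (θstar : Fin d → ℝ)
    (W0 : Matrix (Fin d) (Fin d) ℝ) (hW0 : W0.PosDef)
    (σ : ℝ)
    (η : ℕ → Ω → ℝ) (hηmeas : ∀ i, Measurable (η i))
    (hindep : iIndepFun η P)
    (hident : ∀ i, IdentDistrib (η i) (η 0) P P)
    (hL1 : ∀ i, Integrable (η i) P)
    (hL2 : ∀ i, Integrable (fun ω => (η i ω) ^ 2) P)
    (hmean : ∀ i, ∫ ω, η i ω ∂P = 0)
    (hvar : ∀ i, ∫ ω, (η i ω) ^ 2 ∂P = σ ^ 2)
    (x : ℕ → Ω → Fin d → ℝ)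
    -- within every batch `k`, the `d` actions form an orthonormal basis of `ℝ^d` a.s.
    (horth : ∀ᵐ ω ∂P, ∀ k : ℕ, ∀ j < d, ∀ j' < d,
      x (k * d + j) ω ⬝ᵥ x (k * d + j') ω = if j = j' then (1 : ℝ) else 0)
    -- every action of batch `k` is measurable w.r.t. `F_{k·d} = σ(η₀, …, η_{k·d−1})`
    (hadapt : ∀ k : ℕ, ∀ j < d, Measurable[MeasurableSpace.comap
      (fun ω => (fun i : Fin (k * d) => η (i : ℕ) ω)) inferInstance] (x (k * d + j)))
    (θhat : (l : ℕ) → Ω → Fin d → ℝ)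
    (hθhat : ∀ l ω, θhat l ω =
      (W0 + (Matrix.of fun (i : Fin (l * d)) j => x (i : ℕ) ω j)ᵀ
          * (Matrix.of fun (i : Fin (l * d)) j => x (i : ℕ) ω j))⁻¹
        *ᵥ ((Matrix.of fun (i : Fin (l * d)) j => x (i : ℕ) ω j)ᵀ
          *ᵥ ((Matrix.of fun (i : Fin (l * d)) j => x (i : ℕ) ω j) *ᵥ θstar
              + fun i : Fin (l * d) => η (i : ℕ) ω))) :
    atTop.limsup (fun l : ℕ => (((l * d : ℕ) : ℝ) / (d : ℝ) ^ 2)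
        * ∫ ω, (θhat l ω - θstar) ⬝ᵥ (θhat l ω - θstar) ∂P) ≤ σ ^ 2 :=
  stmt_16_general hd P θstar W0 hW0 σ η hηmeas hindep hL2 hmean hvar x horth hadapt θhat hθhat
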